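/- For every integer n ≥ 2, the sum over all permutations σ of {1,2,…,n} of as(σ), the length of the longest alternating (up-down) subsequence of σ, equals n! · (4n+1)/6; equivalently, the expectation of X_n, the length of the longest alternating subsequence of a uniformly random permutation of {1,…,n}, is μ_n = (2/3)n + 1/6. -/

import Mathlib

/-- The length of the longest alternating (up-down) subsequence of the
permutation `σ` of `{1,…,n}`: the largest `k` for which there exist indices
`i₁ < i₂ < ⋯ < i_k` with `σ(i₁) < σ(i₂) > σ(i₃) < σ(i₄) > ⋯`
(starting with a rise). -/
noncomputable def altSubseqLen {n : ℕ} (σ : Equiv.Perm (Fin n)) : ℕ :=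
  sSup {k | ∃ i : Fin k → Fin n, StrictMono i ∧
    ∀ j : ℕ, ∀ h : j + 1 < k,
      if j % 2 = 0
      then σ (i ⟨j, Nat.lt_of_succ_lt h⟩) < σ (i ⟨j + 1, h⟩)
      else σ (i ⟨j + 1, h⟩) < σ (i ⟨j, Nat.lt_of_succ_lt h⟩)}

/-!
Read `σ` as the word of its ascents and descents, prefixed by a virtual descent from `+∞`. The
longest alternating subsequence is one longer than the number of letter changes in this word:
a greedy subsequence picks up every turning point, and conversely the gaps
between consecutive terms of an alternating subsequence contain steps of alternating directions.
A change at the first letter means `σ 0 < σ 1`, which has probability `1/2`; a change at an inner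
letter means that `σ (i + 1)` does not lie between `σ i` and `σ (i + 2)`, which has probability
`2/3`. Hence `E[as] = 1 + 1/2 + 2 (n - 2) / 3 = (4n + 1) / 6`.
-/

open Finset Function Nat

section Word

variable (w : ℕ → Bool)

def numChanges (a b : ℕ) : ℕ := #{i ∈ Ico a b | w i ≠ w (i + 1)}

variable {w}

lemma numChanges_succ {a b : ℕ} (h : a ≤ b) :
    numChanges w a (b + 1) = numChanges w a b + if w b ≠ w (b + 1) then 1 else 0 := by
  simp only [numChanges, card_filter, sum_Ico_succ_top h]

lemma numChanges_add {a b c : ℕ} (hab : a ≤ b) (hbc : b ≤ c) :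
    numChanges w a c = numChanges w a b + numChanges w b c := by
  simp only [numChanges, card_filter, sum_Ico_consecutive _ hab hbc]

lemma numChanges_mono_right {a b c : ℕ} (h : b ≤ c) : numChanges w a b ≤ numChanges w a c :=
  card_le_card (filter_subset_filter _ (Ico_subset_Ico_right h))

lemma numChanges_pos {a b : ℕ} (hab : a ≤ b) (h : w a ≠ w b) : 0 < numChanges w a b := by
  induction b, hab using Nat.le_induction with
  | base => exact absurd rfl h
  | succ b hab ih =>
    rw [numChanges_succ hab]
    by_cases hb : w b = w (b + 1)
    · exact (ih (hb ▸ h)).trans_le le_self_add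
    · simp [hb]

lemma le_numChanges {p : ℕ → ℕ} {m : ℕ}
    (hp : ∀ j < m, p j < p (j + 1) ∧ w (p j) ≠ w (p (j + 1))) :
    m ≤ numChanges w (p 0) (p m) := by
  induction m with
  | zero => exact Nat.zero_le _
  | succ m ih =>
    have hmono : StrictMonoOn p (Set.Iic (m + 1)) :=
      strictMonoOn_Iic_of_lt_succ fun j hj => by simpa using (hp j hj).1
    rw [numChanges_add (hmono.monotoneOn (by simp) (by simp) (by omega)) (hp m (by omega)).1.le]
    have := numChanges_pos (hp m (by omega)).1.le (hp m (by omega)).2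
    have := ih fun j hj => hp j (by omega)
    omega

end Word

section Sequence

variable {α : Type*} [LinearOrder α] (f : ℕ → α)

/-- Letter `i + 1` records whether `f` rises from `i` to `i + 1`; letter `0` is a virtual
descent into `f 0`. -/
def ascentWord : ℕ → Bool
  | 0 => false
  | i + 1 => decide (f i < f (i + 1))

def AltStep (j a b : ℕ) : Prop := if j % 2 = 0 then f a < f b else f b < f a

def IsAltSubseq (N k : ℕ) (s : ℕ → ℕ) : Prop :=
  (∀ j < k, s j < N) ∧ ∀ j, j + 1 < k → s j < s (j + 1) ∧ AltStep f j (s j) (s (j + 1))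

variable {f}

lemma AltStep.trans {j a b c : ℕ} (hab : AltStep f j a b) (hbc : AltStep f j b c) :
    AltStep f j a c := by
  unfold AltStep at *
  split_ifs at * <;> order

lemma altStep_add_two (j : ℕ) : AltStep f (j + 2) = AltStep f j := by
  funext a b
  simp only [AltStep, Nat.add_mod_right]

lemma exists_ascent_of_lt {a b : ℕ} (hab : a ≤ b) (h : f a < f b) :
    ∃ q, a ≤ q ∧ q < b ∧ f q < f (q + 1) := by
  induction b, hab using Nat.le_induction with
  | base => exact absurd h (lt_irrefl _)
  | succ b hab ih =>
    by_cases hb : f b < f (b + 1)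
    · exact ⟨b, hab, b.lt_succ_self, hb⟩
    · obtain ⟨q, hq⟩ := ih (h.trans_le (not_lt.mp hb))
      exact ⟨q, hq.1, by omega, hq.2.2⟩

lemma exists_altStep_succ {j a b : ℕ} (hab : a ≤ b) (h : AltStep f j a b) :
    ∃ q, a ≤ q ∧ q < b ∧ AltStep f j q (q + 1) := by
  unfold AltStep at *
  split_ifs at *
  · exact exists_ascent_of_lt hab h
  · exact exists_ascent_of_lt (f := OrderDual.toDual ∘ f) hab h

lemma ascentWord_of_altStep {j q : ℕ} (h : AltStep f j q (q + 1)) :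
    ascentWord f (q + 1) = decide (j % 2 = 0) := by
  unfold AltStep at h
  split_ifs at h with hj <;> simp [ascentWord, hj, h, h.not_gt]

lemma altStep_of_ascentWord {j q : ℕ} (hne : f q ≠ f (q + 1))
    (h : ascentWord f (q + 1) = decide (j % 2 = 0)) : AltStep f j q (q + 1) := by
  unfold AltStep
  split_ifs with hj <;> simp_all [ascentWord, lt_of_le_of_ne, Ne.symm]

theorem IsAltSubseq.le_numChanges_add_one {N k : ℕ} {s : ℕ → ℕ} (h : IsAltSubseq f N k s) :
    k ≤ numChanges (ascentWord f) 0 (N - 1) + 1 := by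
  rcases Nat.eq_zero_or_pos k with rfl | hk
  · exact Nat.zero_le _
  have hstep : ∀ j, ∃ q, j + 1 < k → s j ≤ q ∧ q < s (j + 1) ∧ AltStep f j q (q + 1) := by
    intro j
    by_cases hj : j + 1 < k
    · obtain ⟨q, hq⟩ := exists_altStep_succ (h.2 j hj).1.le (h.2 j hj).2
      exact ⟨q, fun _ => hq⟩
    · exact ⟨0, fun h => absurd h hj⟩
  choose q hq using hstep
  -- `p (j + 1)` is the letter of a step of direction `j` inside the `j`-th gap of `s`, and
  -- `p 0` the virtual descent, so the letters at `p 0, p 1, …` alternate.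
  let p : ℕ → ℕ := fun | 0 => 0 | j + 1 => q j + 1
  have hp : ∀ j < k - 1, p j < p (j + 1) ∧
      ascentWord f (p j) ≠ ascentWord f (p (j + 1)) := by
    rintro (_ | j) hj
    · simp only [p]
      rw [ascentWord_of_altStep (hq 0 (by omega)).2.2]
      simp [ascentWord]
    · have h1 := hq j (by omega)
      have h2 := hq (j + 1) (by omega)
      refine ⟨by simp only [p]; omega, ?_⟩
      simp only [p, ascentWord_of_altStep h1.2.2, ascentWord_of_altStep h2.2.2]
      simp
      omega
  have hlast : p (k - 1) ≤ N - 1 := by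
    rcases hk1 : k - 1 with _ | j
    · exact Nat.zero_le _
    · have := (hq j (by omega)).2.1
      have := h.1 (j + 1) (by omega)
      simp only [p]
      omega
  have : k - 1 ≤ numChanges (ascentWord f) 0 (p (k - 1)) := le_numChanges hp
  have := this.trans (numChanges_mono_right hlast)
  omega

lemma IsAltSubseq.snoc {m c : ℕ} {s : ℕ → ℕ} (h : IsAltSubseq f (m + 1) (c + 1) s)
    (hlast : s c = m) (hstep : AltStep f c m (m + 1)) :
    IsAltSubseq f (m + 2) (c + 2) (update s (c + 1) (m + 1)) := by
  refine ⟨fun j hj => ?_, fun j hj => ?_⟩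
  · rcases eq_or_ne j (c + 1) with rfl | hne
    · simp
    · rw [update_of_ne hne]
      have := h.1 j (by omega)
      omega
  · rcases eq_or_ne j c with rfl | hne
    · simp [hlast, hstep]
    · rw [update_of_ne (by omega : j + 1 ≠ c + 1), update_of_ne (by omega : j ≠ c + 1)]
      exact h.2 j (by omega)

lemma IsAltSubseq.replaceLast {m c : ℕ} {s : ℕ → ℕ} (h : IsAltSubseq f (m + 1) (c + 1) s)
    (hlast : s c = m) (hstep : AltStep f (c + 1) m (m + 1)) :
    IsAltSubseq f (m + 2) (c + 1) (update s c (m + 1)) := by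
  refine ⟨fun j hj => ?_, fun j hj => ?_⟩
  · rcases eq_or_ne j c with rfl | hne
    · simp
    · rw [update_of_ne hne]
      have := h.1 j (by omega)
      omega
  · rw [update_of_ne (by omega)]
    rcases eq_or_ne (j + 1) c with rfl | hne
    · obtain ⟨hlt, hj⟩ := h.2 j hj
      rw [hlast] at hlt hj
      rw [altStep_add_two] at hstep
      simpa [hlt.trans (m.lt_succ_self)] using hj.trans hstep
    · rw [update_of_ne hne]
      exact h.2 j (by omega)

/-- Greedy construction: the alternating subsequence of `f 0, …, f m` ends at `m`; a new step
either continues the current run (then `m + 1` replaces `m`) or turns (then `m + 1` is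
appended). -/
theorem exists_isAltSubseq {m : ℕ} (hf : ∀ i < m, f i ≠ f (i + 1)) :
    ∃ s, IsAltSubseq f (m + 1) (numChanges (ascentWord f) 0 m + 1) s ∧
      s (numChanges (ascentWord f) 0 m) = m ∧
      ascentWord f m = decide (numChanges (ascentWord f) 0 m % 2 = 1) := by
  induction m with
  | zero =>
    refine ⟨fun _ => 0, ⟨fun j hj => ?_, fun j hj => ?_⟩, ?_, ?_⟩ <;>
      simp_all [numChanges, ascentWord]
  | succ m ih =>
    obtain ⟨s, hs, hlast, hword⟩ := ih fun i hi => hf i (by omega)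
    rw [numChanges_succ (Nat.zero_le m)]
    set c := numChanges (ascentWord f) 0 m
    have hne := hf m (m.lt_succ_self)
    by_cases hturn : ascentWord f m = ascentWord f (m + 1)
    · have hstep : AltStep f (c + 1) m (m + 1) :=
        altStep_of_ascentWord hne (by rw [← hturn, hword]; simp; omega)
      refine ⟨_, by simpa [hturn] using hs.replaceLast hlast hstep, by simp [hturn], ?_⟩
      simpa [hturn] using hword
    · have hstep : AltStep f c m (m + 1) :=
        altStep_of_ascentWord hne (by cases h : ascentWord f (m + 1) <;> simp_all)
      refine ⟨_, by simpa [hturn] using hs.snoc hlast hstep, by simp [hturn], ?_⟩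
      cases h : ascentWord f (m + 1) <;> simp_all <;> omega

theorem sSup_isAltSubseq {n : ℕ} (hn : 0 < n) (hf : ∀ i, i + 1 < n → f i ≠ f (i + 1)) :
    sSup {k | ∃ s, IsAltSubseq f n k s} = numChanges (ascentWord f) 0 (n - 1) + 1 := by
  obtain ⟨s, hs, -⟩ := exists_isAltSubseq (m := n - 1) fun i hi => hf i (by omega)
  rw [Nat.sub_add_cancel hn] at hs
  exact IsGreatest.csSup_eq ⟨⟨s, hs⟩, fun k ⟨_, hk⟩ => hk.le_numChanges_add_one⟩

end Sequence

section Permutation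

variable {n : ℕ}

def permSeq (σ : Equiv.Perm (Fin n)) (i : ℕ) : ℕ := if h : i < n then σ ⟨i, h⟩ else 0

lemma permSeq_val (σ : Equiv.Perm (Fin n)) (x : Fin n) : permSeq σ x = σ x := by
  simp [permSeq]

lemma altStep_permSeq_iff (σ : Equiv.Perm (Fin n)) (j : ℕ) (x y : Fin n) :
    AltStep (permSeq σ) j x y ↔ if j % 2 = 0 then σ x < σ y else σ y < σ x := by
  simp only [AltStep, permSeq_val, Fin.val_fin_lt]

lemma altSubseqLen_eq_sSup (σ : Equiv.Perm (Fin n)) :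
    altSubseqLen σ = sSup {k | ∃ s, IsAltSubseq (permSeq σ) n k s} := by
  unfold altSubseqLen
  congr 1
  ext k
  simp only [Set.mem_ofPred_eq]
  constructor
  · rintro ⟨i, hi, halt⟩
    refine ⟨fun j => if h : j < k then i ⟨j, h⟩ else 0, fun j hj => by simp [hj], fun j hj => ?_⟩
    simp only [dif_pos hj, dif_pos (Nat.lt_of_succ_lt hj)]
    exact ⟨hi (Fin.mk_lt_mk.2 j.lt_succ_self), (altStep_permSeq_iff σ j _ _).2 (halt j hj)⟩
  · rintro ⟨s, hsn, hs⟩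
    have hmono : StrictMonoOn s (Set.Iic (k - 1)) :=
      strictMonoOn_Iic_of_lt_succ fun j hj => by simpa using (hs j (by omega)).1
    refine ⟨fun j => ⟨s j, hsn j j.2⟩, fun a b hab => ?_, fun j hj => ?_⟩
    · exact Fin.mk_lt_mk.2 (hmono (by simp; omega) (by simp; omega) hab)
    · exact (altStep_permSeq_iff σ j ⟨s j, _⟩ ⟨s (j + 1), _⟩).1 (hs j hj).2

theorem altSubseqLen_eq_numChanges (hn : 0 < n) (σ : Equiv.Perm (Fin n)) :
    altSubseqLen σ = numChanges (ascentWord (permSeq σ)) 0 (n - 1) + 1 := by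
  rw [altSubseqLen_eq_sSup, sSup_isAltSubseq hn]
  intro i hi h
  simp only [permSeq, dif_pos hi, dif_pos (Nat.lt_of_succ_lt hi)] at h
  simpa [Fin.ext_iff] using σ.injective (Fin.ext h)

end Permutation

namespace Equiv.Perm

variable {ι : Type*} [Fintype ι] [LinearOrder ι]

lemma card_filter_mul_right (τ : Perm ι) (P : Perm ι → Prop) [DecidablePred P] :
    #{σ | P (σ * τ)} = #{σ | P σ} :=
  card_equiv (Equiv.mulRight τ) (by simp)

theorem two_mul_card_apply_lt {a b : ι} (hab : a ≠ b) :
    2 * #{σ : Perm ι | σ a < σ b} = (Fintype.card ι)! := by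
  have hswap : #{σ : Perm ι | σ b < σ a} = #{σ : Perm ι | σ a < σ b} := by
    simpa using card_filter_mul_right (swap a b) fun σ => σ a < σ b
  have hcompl : #{σ : Perm ι | ¬σ a < σ b} = #{σ : Perm ι | σ b < σ a} := by
    congr 1
    ext σ
    simpa using (σ.injective.ne hab).symm.le_iff_lt
  have htotal := card_filter_add_card_filter_not (s := univ) fun σ : Perm ι => σ a < σ b
  rw [hcompl, hswap, Finset.card_univ, Fintype.card_perm] at htotal
  omega

/-- Exactly one of `σ a, σ b, σ c` lies between the other two, and transpositions permute
the three cases, so each has probability `1/3`. -/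
theorem three_mul_card_apply_between {a b c : ι} (hab : a ≠ b) (hac : a ≠ c) (hbc : b ≠ c) :
    3 * #{σ : Perm ι | σ a < σ b ∧ σ b < σ c ∨ σ c < σ b ∧ σ b < σ a} =
      (Fintype.card ι)! := by
  let B (x y z : ι) : ℕ := #{σ : Perm ι | σ x < σ y ∧ σ y < σ z ∨ σ z < σ y ∧ σ y < σ x}
  have hba : B b a c = B a b c := by
    simpa [B, swap_apply_of_ne_of_ne hac.symm hbc.symm] using
      card_filter_mul_right (swap a b) fun σ => σ a < σ b ∧ σ b < σ c ∨ σ c < σ b ∧ σ b < σ a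
  have hcb : B a c b = B a b c := by
    simpa [B, swap_apply_of_ne_of_ne hab hac] using
      card_filter_mul_right (swap b c) fun σ => σ a < σ b ∧ σ b < σ c ∨ σ c < σ b ∧ σ b < σ a
  have hsum : B b a c + B a b c + B a c b = (Fintype.card ι)! := by
    have hone (σ : Perm ι) :
        ((if σ b < σ a ∧ σ a < σ c ∨ σ c < σ a ∧ σ a < σ b then 1 else 0) +
          (if σ a < σ b ∧ σ b < σ c ∨ σ c < σ b ∧ σ b < σ a then 1 else 0) +
          (if σ a < σ c ∧ σ c < σ b ∨ σ b < σ c ∧ σ c < σ a then 1 else 0) : ℕ) = 1 := by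
      have := σ.injective.ne hab
      have := σ.injective.ne hac
      have := σ.injective.ne hbc
      grind
    simp only [B, card_filter, ← sum_add_distrib, hone, sum_const, Finset.card_univ,
      Fintype.card_perm, smul_eq_mul, mul_one]
  change 3 * B a b c = _
  omega

end Equiv.Perm

section Expectation

variable {n : ℕ}

lemma ascentWord_permSeq (σ : Equiv.Perm (Fin n)) {i : ℕ} (hi : i + 1 < n) :
    ascentWord (permSeq σ) (i + 1) = decide (σ ⟨i, by omega⟩ < σ ⟨i + 1, hi⟩) := by
  simp [ascentWord, permSeq, hi, Nat.lt_of_succ_lt hi]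

lemma two_mul_card_ascentWord_zero_ne (hn : 2 ≤ n) :
    2 * #{σ : Equiv.Perm (Fin n) | ascentWord (permSeq σ) 0 ≠ ascentWord (permSeq σ) 1} =
      n ! := by
  convert Equiv.Perm.two_mul_card_apply_lt (ι := Fin n) (a := ⟨0, by omega⟩) (b := ⟨1, hn⟩)
    (by simp) using 3
  · ext σ
    simp [ascentWord, permSeq, show 0 < n by omega, show 1 < n from hn]
  · simp

lemma three_mul_card_ascentWord_succ_ne {i : ℕ} (hi : i + 2 < n) :
    3 * #{σ : Equiv.Perm (Fin n) |
      ascentWord (permSeq σ) (i + 1) ≠ ascentWord (permSeq σ) (i + 2)} = 2 * n ! := by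
  let a : Fin n := ⟨i, by omega⟩
  let b : Fin n := ⟨i + 1, by omega⟩
  let c : Fin n := ⟨i + 2, hi⟩
  have hbetween := Equiv.Perm.three_mul_card_apply_between (a := a) (b := b) (c := c)
    (by simp [a, b, Fin.ext_iff]) (by simp [a, c, Fin.ext_iff]) (by simp [b, c, Fin.ext_iff])
  have hturn : #{σ : Equiv.Perm (Fin n) |
      ascentWord (permSeq σ) (i + 1) ≠ ascentWord (permSeq σ) (i + 2)} =
      #{σ : Equiv.Perm (Fin n) | ¬(σ a < σ b ∧ σ b < σ c ∨ σ c < σ b ∧ σ b < σ a)} := by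
    congr 1
    ext σ
    have := σ.injective.ne (show a ≠ b by simp [a, b, Fin.ext_iff])
    have := σ.injective.ne (show b ≠ c by simp [b, c, Fin.ext_iff])
    simp only [mem_filter, mem_univ, true_and, ascentWord_permSeq σ (by omega : i + 1 < n),
      ascentWord_permSeq σ hi]
    grind
  have := card_filter_add_card_filter_not (s := univ)
    fun σ : Equiv.Perm (Fin n) => σ a < σ b ∧ σ b < σ c ∨ σ c < σ b ∧ σ b < σ a
  rw [Finset.card_univ, Fintype.card_perm, Fintype.card_fin] at this
  rw [Fintype.card_fin] at hbetween
  rw [hturn]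
  omega

lemma sum_numChanges_ascentWord_permSeq (m : ℕ) :
    ∑ σ : Equiv.Perm (Fin (m + 2)), numChanges (ascentWord (permSeq σ)) 0 (m + 1) =
      #{σ : Equiv.Perm (Fin (m + 2)) | ascentWord (permSeq σ) 0 ≠ ascentWord (permSeq σ) 1} +
      ∑ i ∈ range m, #{σ : Equiv.Perm (Fin (m + 2)) |
        ascentWord (permSeq σ) (i + 1) ≠ ascentWord (permSeq σ) (i + 2)} := by
  calc
    _ = ∑ i ∈ range (m + 1), #{σ : Equiv.Perm (Fin (m + 2)) |
        ascentWord (permSeq σ) i ≠ ascentWord (permSeq σ) (i + 1)} := by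
      simp only [numChanges, ← range_eq_Ico]
      exact sum_card_bipartiteAbove_eq_sum_card_bipartiteBelow
        (fun σ i => ascentWord (permSeq σ) i ≠ ascentWord (permSeq σ) (i + 1))
    _ = _ := by rw [sum_range_succ', add_comm]

theorem sum_altSubseqLen (hn : 2 ≤ n) :
    ∑ σ : Equiv.Perm (Fin n), (altSubseqLen σ : ℚ) = n ! * (4 * n + 1) / 6 := by
  obtain ⟨m, rfl⟩ : ∃ m, n = m + 2 := ⟨n - 2, by omega⟩
  have hfirst := two_mul_card_ascentWord_zero_ne (n := m + 2) (by omega)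
  have hinner (i) (hi : i ∈ range m) := three_mul_card_ascentWord_succ_ne (n := m + 2)
    (i := i) (by simp at hi; omega)
  simp only [altSubseqLen_eq_numChanges (Nat.succ_pos _)]
  push_cast
  rw [sum_add_distrib, ← Nat.cast_sum, sum_numChanges_ascentWord_permSeq]
  have hrest : 3 * ∑ i ∈ range m, #{σ : Equiv.Perm (Fin (m + 2)) |
      ascentWord (permSeq σ) (i + 1) ≠ ascentWord (permSeq σ) (i + 2)} = m * (2 * (m + 2)!) := by
    rw [mul_sum, sum_congr rfl hinner, sum_const, card_range, smul_eq_mul]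
  have hone : ∑ _σ : Equiv.Perm (Fin (m + 2)), (1 : ℚ) = (m + 2)! := by
    simp [Finset.card_univ, Fintype.card_perm]
  rw [hone]
  push_cast
  qify at hfirst hrest
  linarith

end Expectation

/-- For every `n ≥ 2`, `∑_{σ ∈ S_n} as(σ) = n!·(4n+1)/6`; equivalently the
expectation of `X_n` is `μ_n = (2/3)n + 1/6`. -/
theorem stanley_expectation (n : ℕ) (hn : 2 ≤ n) :
    (∑ σ : Equiv.Perm (Fin n), (altSubseqLen σ : ℚ)) = (Nat.factorial n : ℚ) * (4 * n + 1) / 6 ∧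
    (1 / (Nat.factorial n : ℚ)) * ∑ σ : Equiv.Perm (Fin n), (altSubseqLen σ : ℚ)
      = 2 / 3 * n + 1 / 6 := by
  have hsum := sum_altSubseqLen hn
  refine ⟨hsum, ?_⟩
  rw [hsum]
  field_simp
  ring
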